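/- arXiv:1105.3631 — 5 statements merged into one kernel-verified Lean document; each statement's English description precedes it below -/
import Mathlib

section
/- Let n ≥ 3, a > 0, and let α₁ ≥ α₂ be real numbers with α₂ ≥ (a − α₁ − α₂)/(n−2) and α₁ + α₂ ≤ a. If x ∈ ℝ^n has nonnegative components arranged in nonincreasing order, ∑_{i=1}^n x_i = a, x_1 ≥ α₁ and x_2 ≥ α₂, then the vector v = (α₁, α₂, (a−α₁−α₂)/(n−2), …, (a−α₁−α₂)/(n−2)) ∈ ℝ^n (with n−2 equal trailing components) is majorized by x. -/
/-- `x` is majorized by `y`: all partial sums of `x` (components in nonincreasing order)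
are at most the corresponding partial sums of `y`, with equal total sums. -/
def IsMajorizedBy {n : ℕ} (x y : Fin n → ℝ) : Prop :=
  (∀ k : ℕ, k < n →
      ∑ i ∈ Finset.univ.filter (fun i : Fin n => (i : ℕ) < k), x i ≤
        ∑ i ∈ Finset.univ.filter (fun i : Fin n => (i : ℕ) < k), y i) ∧
    ∑ i, x i = ∑ i, y i

/-!
Write `c = (a - α₁ - α₂)/(n - 2)` and `y = x - v`. Then `y` has total sum `0`, its first two
entries are nonnegative, and from the third entry on it is `x - c`, hence nonincreasing. For a
prefix ending at `k`, either the entries of `y` from `k` on are all `≤ 0`, so the tail sum is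
`≤ 0` and the prefix sum `≥ 0`; or some entry from `k` on is positive, and then every entry of
the prefix beyond the first two dominates it, so the prefix sum is again `≥ 0`.
-/

open Finset

theorem sum_nonneg_or_sum_nonpos_of_forall_le {ι M : Type*} [AddCommMonoid M] [LinearOrder M]
    [IsOrderedAddMonoid M] {s t : Finset ι} {y : ι → M}
    (hst : ∀ i ∈ s, ∀ j ∈ t, y j ≤ y i) :
    0 ≤ ∑ i ∈ s, y i ∨ ∑ j ∈ t, y j ≤ 0 := by
  by_cases hpos : ∃ j ∈ t, 0 < y j
  · obtain ⟨j, hj, hyj⟩ := hpos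
    exact .inl <| sum_nonneg fun i hi => hyj.le.trans (hst i hi j hj)
  · push Not at hpos
    exact .inr <| sum_nonpos hpos

theorem sum_filter_lt_nonneg_of_antitoneOn {ι : Type*} [Fintype ι] [LinearOrder ι]
    {y : ι → ℝ} {m : ι} (hlow : ∀ i < m, 0 ≤ y i) (hanti : AntitoneOn y (Set.Ici m))
    (hsum : ∑ i, y i = 0) (k : ι) :
    0 ≤ ∑ i ∈ univ.filter (· < k), y i := by
  have hsplit : ∑ i ∈ univ.filter (· < k), y i + ∑ i ∈ univ.filter (¬ · < k), y i = 0 :=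
    (sum_filter_add_sum_filter_not _ _ _).trans hsum
  have hmiddle : ∀ i ∈ univ.filter (fun i => m ≤ i ∧ i < k), ∀ j ∈ univ.filter (¬ · < k),
      y j ≤ y i := by
    intro i hi j hj
    simp only [mem_filter, mem_univ, true_and, not_lt] at hi hj
    exact hanti hi.1 (hi.1.trans (hi.2.trans_le hj).le) (hi.2.trans_le hj).le
  rcases sum_nonneg_or_sum_nonpos_of_forall_le hmiddle with hmid | htail
  · refine hmid.trans (sum_le_sum_of_subset_of_nonneg ?_ fun i hi hnot => hlow i ?_)
    · intro i hi
      simp only [mem_filter, mem_univ, true_and] at hi ⊢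
      exact hi.2
    · simp only [mem_filter, mem_univ, true_and, not_and, not_lt] at hi hnot
      exact lt_of_not_ge fun hmi => (hnot hmi).not_gt hi
  · linarith

theorem sum_fin_ite_zero_one (n : ℕ) (p q r : ℝ) :
    ∑ i : Fin (n + 2), (if (i : ℕ) = 0 then p else if (i : ℕ) = 1 then q else r) =
      p + q + n * r := by
  simp [Fin.sum_univ_succ, add_assoc]

/-- For `n ≥ 3`, `a > 0`, `α₁ ≥ α₂ ≥ (a − α₁ − α₂)/(n−2)` and `α₁ + α₂ ≤ a`, the vector
`(α₁, α₂, (a−α₁−α₂)/(n−2), …, (a−α₁−α₂)/(n−2))` is majorized by every nonnegative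
nonincreasing `x ∈ ℝ^n` with `∑ x_i = a`, `x_1 ≥ α₁` and `x_2 ≥ α₂`. -/
theorem stmt_5 {n : ℕ} (hn : 3 ≤ n) (a : ℝ) (α₁ α₂ : ℝ)
    (x : Fin n → ℝ) (hx : Antitone x)
    (hsum : ∑ i, x i = a)
    (hx1 : α₁ ≤ x ⟨0, by omega⟩) (hx2 : α₂ ≤ x ⟨1, by omega⟩) :
    IsMajorizedBy
      (fun i : Fin n =>
        if (i : ℕ) = 0 then α₁ else if (i : ℕ) = 1 then α₂ else (a - α₁ - α₂) / (n - 2))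
      x := by
  obtain ⟨m, rfl⟩ : ∃ m, n = m + 2 := ⟨n - 2, by omega⟩
  set c := (a - α₁ - α₂) / ((m + 2 : ℕ) - 2 : ℝ)
  set v : Fin (m + 2) → ℝ := fun i => if (i : ℕ) = 0 then α₁ else if (i : ℕ) = 1 then α₂ else c
  have hv_sum : ∑ i, v i = a := by
    have hm : (m : ℝ) ≠ 0 := by exact_mod_cast (show m ≠ 0 by omega)
    have hc : (m : ℝ) * c = a - α₁ - α₂ := by
      simp only [c, Nat.cast_add, Nat.cast_ofNat, add_sub_cancel_right]
      exact mul_div_cancel₀ _ hm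
    simp only [v, sum_fin_ite_zero_one, hc]
    ring
  have hlow : ∀ i < (⟨2, by omega⟩ : Fin (m + 2)), 0 ≤ x i - v i := by
    rintro ⟨_ | _ | i, hi⟩ hi2
    · simpa [v] using hx1
    · simpa [v] using hx2
    · exact absurd hi2 (by simp [Fin.lt_def])
  have hanti : AntitoneOn (fun i => x i - v i) (Set.Ici ⟨2, by omega⟩) := by
    intro i hi j hj hij
    have hv : ∀ l ∈ Set.Ici (⟨2, by omega⟩ : Fin (m + 2)), v l = c := by
      intro l hl
      simp only [Set.mem_Ici, Fin.le_def] at hl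
      simp only [v, show (l : ℕ) ≠ 0 by omega, show (l : ℕ) ≠ 1 by omega, if_false]
    simpa only [hv i hi, hv j hj, sub_le_sub_iff_right] using hx hij
  refine ⟨fun k hk => ?_, hv_sum.trans hsum.symm⟩
  have hprefix := sum_filter_lt_nonneg_of_antitoneOn hlow hanti
    (by rw [sum_sub_distrib, hsum, hv_sum, sub_self]) ⟨k, hk⟩
  simpa [Fin.lt_def, sum_sub_distrib] using hprefix
end

section
/- Let G = (V,E) be a finite simple undirected graph with no isolated vertices and m edges, let α be a nonzero real number, and let x ∈ ℝ^m be the vector whose components are the values d_u^α + d_v^α over all edges {u,v} ∈ E, arranged in nonincreasing order. If y, z ∈ ℝ^m have nonincreasing components, y is majorized by x, and x is majorized by z, then ( ∑_{i=1}^m y_i^2 − ∑_{v∈V} d_v^{2α+1} ) / 2 ≤ R_α(G) ≤ ( ∑_{i=1}^m z_i^2 − ∑_{v∈V} d_v^{2α+1} ) / 2. -/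
open Finset


lemma filter_sum_eq {m : ℕ} (f : Fin m → ℝ) (k : ℕ) (hk : k ≤ m) :
    ∑ i ∈ Finset.univ.filter (fun i : Fin m => (i : ℕ) < k), f i
      = ∑ j ∈ range k, (fun j => if h : j < m then f ⟨j, h⟩ else 0) j := by
  rw [Finset.sum_filter]
  have : ∀ i : Fin m, (if (i : ℕ) < k then f i else 0)
      = (fun j => if j < k then (if h : j < m then f ⟨j, h⟩ else 0) else 0) (i : ℕ) := by
    intro i; simp [i.isLt]
  rw [Finset.sum_congr rfl fun i _ => this i,
    Fin.sum_univ_eq_sum_range (fun j => if j < k then (if h : j < m then f ⟨j, h⟩ else 0) else 0) m]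
  rw [← Finset.sum_subset (Finset.range_subset_range.2 hk)]
  · exact Finset.sum_congr rfl fun j hj => by rw [mem_range] at hj; simp [hj]
  · intro j _ hj; rw [mem_range] at hj; simp [hj]

lemma abel_nonneg (b d : ℕ → ℝ) (m : ℕ)
    (hb : ∀ i, i + 1 < m → b (i + 1) ≤ b i)
    (hA : ∀ k, k ≤ m → 0 ≤ ∑ i ∈ range k, d i)
    (hAm : ∑ i ∈ range m, d i = 0) :
    0 ≤ ∑ i ∈ range m, b i * d i := by
  have h := Finset.sum_range_by_parts b d m
  simp only [smul_eq_mul] at h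
  rw [h, hAm, mul_zero, zero_sub, le_neg, neg_zero]
  apply Finset.sum_nonpos
  intro i hi
  rw [mem_range] at hi
  have h1 : b (i + 1) - b i ≤ 0 := by
    have := hb i (by omega); linarith
  have h2 : 0 ≤ ∑ j ∈ range (i + 1), d j := hA _ (by omega)
  exact mul_nonpos_of_nonpos_of_nonneg h1 h2

lemma karamata_sq {m : ℕ} (a b : Fin m → ℝ) (hb : Antitone b)
    (h : IsMajorizedBy b a) : ∑ i, b i ^ 2 ≤ ∑ i, a i ^ 2 := by
  set b' : ℕ → ℝ := fun j => if h : j < m then b ⟨j, h⟩ else 0 with hb'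
  set d' : ℕ → ℝ := fun j => if h : j < m then a ⟨j, h⟩ - b ⟨j, h⟩ else 0 with hd'
  have hd'sum : ∀ k, k ≤ m → ∑ j ∈ range k, d' j =
      (∑ i ∈ Finset.univ.filter (fun i : Fin m => (i : ℕ) < k), a i)
      - ∑ i ∈ Finset.univ.filter (fun i : Fin m => (i : ℕ) < k), b i := by
    intro k hk
    rw [filter_sum_eq a k hk, filter_sum_eq b k hk, ← Finset.sum_sub_distrib]
    exact Finset.sum_congr rfl fun j hj => by
      rw [mem_range] at hj; simp [hd', (by omega : j < m)]
  have hfull : ∀ f : Fin m → ℝ,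
      ∑ i ∈ Finset.univ.filter (fun i : Fin m => (i : ℕ) < m), f i = ∑ i, f i := by
    intro f; apply Finset.sum_congr _ fun _ _ => rfl
    ext i; simp [i.isLt]
  have key : 0 ≤ ∑ j ∈ range m, b' j * d' j := by
    apply abel_nonneg
    · intro i hi
      simp only [hb', dif_pos hi, dif_pos (by omega : i < m)]
      exact hb (by simp [Fin.le_def])
    · intro k hk
      rw [hd'sum k hk]
      rcases eq_or_lt_of_le hk with rfl | hk'
      · rw [hfull, hfull, h.2]; simp
      · linarith [h.1 k hk']
    · rw [hd'sum m le_rfl, hfull, hfull, h.2]; ring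
  have key2 : 0 ≤ ∑ i : Fin m, b i * (a i - b i) := by
    have : ∑ j ∈ range m, b' j * d' j = ∑ i : Fin m, b i * (a i - b i) := by
      rw [← Fin.sum_univ_eq_sum_range (fun j => b' j * d' j) m]
      exact Finset.sum_congr rfl fun i _ => by simp [hb', hd', i.isLt]
    linarith [this ▸ key]
  have ptwise : ∀ i : Fin m, b i ^ 2 + 2 * (b i * (a i - b i)) ≤ a i ^ 2 := by
    intro i; nlinarith [sq_nonneg (a i - b i)]
  calc ∑ i, b i ^ 2 ≤ ∑ i, (b i ^ 2 + 2 * (b i * (a i - b i))) := by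
        rw [Finset.sum_add_distrib, ← Finset.mul_sum]; nlinarith [key2]
    _ ≤ ∑ i, a i ^ 2 := Finset.sum_le_sum fun i _ => ptwise i

open Finset

lemma handshake {V : Type*} [Fintype V] [DecidableEq V] (G : SimpleGraph V)
    [DecidableRel G.Adj] (f : V → ℝ) :
    ∑ e ∈ G.edgeFinset,
        Sym2.lift ⟨fun u v => f u + f v, fun u v => by ring⟩ e
      = ∑ v : V, (G.degree v : ℝ) * f v := by
  have step1 : ∀ e ∈ G.edgeFinset,
      Sym2.lift ⟨fun u v => f u + f v, fun u v => by ring⟩ e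
        = ∑ w : V, if w ∈ e then f w else 0 := by
    intro e he
    induction e with
    | _ u v =>
      rw [SimpleGraph.mem_edgeFinset, SimpleGraph.mem_edgeSet] at he
      have hne : u ≠ v := G.ne_of_adj he
      rw [← Finset.sum_filter]
      have : Finset.univ.filter (fun w => w ∈ s(u, v)) = {u, v} := by
        ext w; simp [Sym2.mem_iff]
      rw [this, Finset.sum_pair hne]
      simp
  rw [Finset.sum_congr rfl step1, Finset.sum_comm]
  apply Finset.sum_congr rfl
  intro w _
  rw [← Finset.sum_filter, Finset.sum_const]
  have : G.edgeFinset.filter (fun e => w ∈ e) = G.incidenceFinset w := by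
    rw [SimpleGraph.incidenceFinset_eq_filter]
  rw [this, SimpleGraph.card_incidenceFinset_eq_degree]
  simp [mul_comm]


set_option maxHeartbeats 1000000 in
/-- Let `x ∈ ℝ^m` be the values `d_u^α + d_v^α` over the `m` edges of `G`, arranged in
nonincreasing order. If `y ⊴ x ⊴ z` (`y, z` nonincreasing), then
`(∑ y_i² − ∑_v d_v^{2α+1})/2 ≤ R_α(G) ≤ (∑ z_i² − ∑_v d_v^{2α+1})/2`. -/
theorem stmt_6 {V : Type*} [Fintype V] [DecidableEq V] (G : SimpleGraph V)
    [DecidableRel G.Adj] (hiso : ∀ v : V, 0 < G.degree v) (α : ℝ) (hα : α ≠ 0)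
    (m : ℕ) (hm : m = G.edgeFinset.card)
    (x y z : Fin m → ℝ) (hxa : Antitone x) (hya : Antitone y) (hza : Antitone z)
    (hx : ∃ e : Fin m ≃ G.edgeFinset, ∀ i, x i =
      Sym2.lift ⟨fun u v => (G.degree u : ℝ) ^ α + (G.degree v : ℝ) ^ α,
        fun u v => by ring⟩ (e i : Sym2 V))
    (hyx : IsMajorizedBy y x) (hxz : IsMajorizedBy x z) :
    (∑ i, y i ^ 2 - ∑ v : V, (G.degree v : ℝ) ^ (2 * α + 1)) / 2 ≤
      (∑ e ∈ G.edgeFinset,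
        Sym2.lift ⟨fun u v => ((G.degree u : ℝ) * (G.degree v : ℝ)) ^ α,
          fun u v => by simp [mul_comm]⟩ e) ∧
    (∑ e ∈ G.edgeFinset,
        Sym2.lift ⟨fun u v => ((G.degree u : ℝ) * (G.degree v : ℝ)) ^ α,
          fun u v => by simp [mul_comm]⟩ e) ≤
      (∑ i, z i ^ 2 - ∑ v : V, (G.degree v : ℝ) ^ (2 * α + 1)) / 2 := by
  obtain ⟨eqv, he⟩ := hx
  set F : Sym2 V → ℝ := Sym2.lift ⟨fun u v => (G.degree u : ℝ) ^ α + (G.degree v : ℝ) ^ α,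
    fun u v => by ring⟩ with hF
  set G2 : Sym2 V → ℝ := Sym2.lift ⟨fun u v => ((G.degree u : ℝ) * (G.degree v : ℝ)) ^ α,
    fun u v => by simp [mul_comm]⟩ with hG2
  set G1 : Sym2 V → ℝ := Sym2.lift ⟨fun u v => (G.degree u : ℝ) ^ (2*α) + (G.degree v : ℝ) ^ (2*α),
    fun u v => by ring⟩ with hG1
  have hpos : ∀ v : V, (0:ℝ) < (G.degree v : ℝ) := fun v => by exact_mod_cast hiso v
  have hxsum : ∑ i, x i ^ 2 = ∑ s ∈ G.edgeFinset, (F s) ^ 2 := by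
    calc ∑ i, x i ^ 2 = ∑ i : Fin m, (F (eqv i : Sym2 V)) ^ 2 :=
          Finset.sum_congr rfl fun i _ => by rw [he i]
      _ = ∑ a : G.edgeFinset, (F (a : Sym2 V)) ^ 2 := Equiv.sum_comp eqv (fun a : G.edgeFinset => F (a : Sym2 V) ^ 2)
      _ = ∑ s ∈ G.edgeFinset, (F s) ^ 2 := Finset.sum_coe_sort G.edgeFinset (fun s => F s ^ 2)
  have edgewise : ∀ s ∈ G.edgeFinset, (F s) ^ 2 = G1 s + 2 * G2 s := by
    intro s hs
    induction s with
    | _ u v =>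
      rw [SimpleGraph.mem_edgeFinset, SimpleGraph.mem_edgeSet] at hs
      have hu := hpos u
      have hv := hpos v
      simp only [hF, hG1, hG2, Sym2.lift_mk]
      have h1 : ((G.degree u:ℝ)^α)^2 = (G.degree u:ℝ)^(2*α) := by
        rw [sq, ← Real.rpow_add hu]; ring_nf
      have h2 : ((G.degree v:ℝ)^α)^2 = (G.degree v:ℝ)^(2*α) := by
        rw [sq, ← Real.rpow_add hv]; ring_nf
      have h3 : ((G.degree u:ℝ) * (G.degree v:ℝ))^α = (G.degree u:ℝ)^α * (G.degree v:ℝ)^α :=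
        Real.mul_rpow hu.le hv.le
      nlinarith [h1, h2, h3]
  have hG1sum : ∑ s ∈ G.edgeFinset, G1 s = ∑ v : V, (G.degree v : ℝ) ^ (2 * α + 1) := by
    rw [hG1, handshake G (fun v => (G.degree v : ℝ) ^ (2*α))]
    apply Finset.sum_congr rfl
    intro v _
    rw [Real.rpow_add (hpos v), Real.rpow_one]; ring
  have hkey : ∑ i, x i ^ 2 = ∑ v : V, (G.degree v : ℝ) ^ (2 * α + 1)
      + 2 * ∑ s ∈ G.edgeFinset, G2 s := by
    rw [hxsum, Finset.sum_congr rfl edgewise, Finset.sum_add_distrib, hG1sum, ← Finset.mul_sum]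
  have hy2 : ∑ i, y i ^ 2 ≤ ∑ i, x i ^ 2 := karamata_sq x y hya hyx
  have hz2 : ∑ i, x i ^ 2 ≤ ∑ i, z i ^ 2 := karamata_sq z x hxa hxz
  constructor <;> linarith
end

section
/- Let G be a connected simple undirected graph on n ≥ 2 vertices with m edges, and let λ₁ be the largest eigenvalue of its adjacency matrix A(G). If k is a real number with 2m/n ≤ k ≤ λ₁, then the energy of G satisfies E(G) ≤ k + √( (n−1)(2m − k²) ). -/
open Polynomial Matrix Finset

open Polynomial Matrix

theorem aux_conj {N : Type*} [Fintype N] [DecidableEq N] (U B V : Matrix N N ℝ)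
    (hUV : U * V = 1) (hVU : V * U = 1) : (U * B * V).charpoly = B.charpoly := by
  have h1 : (scalar N (X : ℝ[X])) = (X : ℝ[X]) • (1 : Matrix N N ℝ[X]) := by
    simp [Matrix.scalar, smul_one_eq_diagonal]
  have hone : (C : ℝ →+* ℝ[X]).mapMatrix (U * V) = 1 := by rw [hUV]; exact RingHom.map_one _
  have hone' : (C : ℝ →+* ℝ[X]).mapMatrix (V * U) = 1 := by rw [hVU]; exact RingHom.map_one _
  have hcm : charmatrix (U * B * V) =
      (C : ℝ →+* ℝ[X]).mapMatrix U * charmatrix B * (C : ℝ →+* ℝ[X]).mapMatrix V := by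
    rw [charmatrix, charmatrix, mul_sub, sub_mul]
    congr 1
    · rw [h1, mul_smul_comm, smul_mul_assoc, mul_one, ← RingHom.map_mul, hone]
    · rw [← RingHom.map_mul, ← RingHom.map_mul]
  have h2 : ((C : ℝ →+* ℝ[X]).mapMatrix V).det * ((C : ℝ →+* ℝ[X]).mapMatrix U).det = 1 := by
    rw [← det_mul, ← RingHom.map_mul, hone', det_one]
  rw [Matrix.charpoly, Matrix.charpoly, hcm, det_mul, det_mul]
  calc ((C : ℝ →+* ℝ[X]).mapMatrix U).det * (charmatrix B).det * ((C : ℝ →+* ℝ[X]).mapMatrix V).det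
      = (((C : ℝ →+* ℝ[X]).mapMatrix V).det * ((C : ℝ →+* ℝ[X]).mapMatrix U).det) * (charmatrix B).det := by ring
    _ = (charmatrix B).det := by rw [h2, one_mul]

theorem aux_diag {N : Type*} [Fintype N] [DecidableEq N] (d : N → ℝ) :
    (Matrix.diagonal d).charpoly = ∏ i, (X - C (d i)) := by
  rw [Matrix.charpoly]
  have : charmatrix (Matrix.diagonal d) = Matrix.diagonal (fun i => (X : ℝ[X]) - C (d i)) := by
    ext i j
    by_cases h : i = j
    · subst h; simp [charmatrix_apply_eq]
    · simp [charmatrix_apply_ne _ _ _ h, Matrix.diagonal_apply_ne _ h]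
  rw [this, det_diagonal]


theorem aux_mono (nr mr a k x y : ℝ) (hn2 : 2 ≤ nr) (hk0 : 1 ≤ k) (hka : k ≤ a)
    (hsq_a : a ^ 2 ≤ 2 * mr) (hnk : 2 * mr ≤ nr * k ^ 2)
    (hx0 : 0 ≤ x) (hy0 : 0 ≤ y)
    (hx2 : x ^ 2 = (nr - 1) * (2 * mr - a ^ 2))
    (hy2 : y ^ 2 = (nr - 1) * (2 * mr - k ^ 2)) :
    a + x ≤ k + y := by
  have hna : 2 * mr ≤ nr * a ^ 2 := by
    nlinarith [mul_nonneg (by linarith : (0:ℝ) ≤ nr)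
      (mul_nonneg (sub_nonneg.2 hka) (by linarith : (0:ℝ) ≤ a + k))]
  have hxb : x ≤ (nr - 1) * a := by
    nlinarith [mul_nonneg (by linarith : (0:ℝ) ≤ nr - 1)
      (by linarith : (0:ℝ) ≤ nr * a ^ 2 - 2 * mr),
      mul_nonneg (by linarith : (0:ℝ) ≤ nr - 1) (by linarith : (0:ℝ) ≤ a),
      sq_nonneg (x - (nr-1)*a), sq_nonneg (x + (nr-1)*a)]
  have hyb : y ≤ (nr - 1) * k := by
    nlinarith [mul_nonneg (by linarith : (0:ℝ) ≤ nr - 1)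
      (by linarith : (0:ℝ) ≤ nr * k ^ 2 - 2 * mr),
      mul_nonneg (by linarith : (0:ℝ) ≤ nr - 1) (by linarith : (0:ℝ) ≤ k),
      sq_nonneg (y - (nr-1)*k), sq_nonneg (y + (nr-1)*k)]
  by_cases hxy : x + y = 0
  · have hx' : x = 0 := by linarith
    have hy' : y = 0 := by linarith
    have h1 : (nr - 1) * (2 * mr - a ^ 2) = 0 := by rw [← hx2, hx']; ring
    have h2 : (nr - 1) * (2 * mr - k ^ 2) = 0 := by rw [← hy2, hy']; ring
    have h3 : a ^ 2 = 2 * mr := by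
      rcases mul_eq_zero.mp h1 with h | h
      · linarith
      · linarith
    have h4 : k ^ 2 = 2 * mr := by
      rcases mul_eq_zero.mp h2 with h | h
      · linarith
      · linarith
    have hak2 : 2 ≤ a + k := by linarith
    have : a ≤ k := by nlinarith
    linarith
  · have hxy' : (0:ℝ) < x + y := lt_of_le_of_ne (by linarith) (Ne.symm hxy)
    have hP : (a - k) * (x + y) ≤ y ^ 2 - x ^ 2 := by
      nlinarith [mul_nonneg (sub_nonneg.2 hka)
        (by linarith : (0:ℝ) ≤ (nr - 1) * (a + k) - (x + y))]
    have h2 : (a - k) * (x + y) ≤ (y - x) * (x + y) := by nlinarith [hP]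
    have h3 : a - k ≤ y - x := le_of_mul_le_mul_right h2 hxy'
    linarith

set_option maxHeartbeats 1600000 in
open Polynomial Matrix Finset in
/-- For a connected graph `G` on `n ≥ 2` vertices with `m` edges, largest adjacency
eigenvalue `λ₁`, and any real `k` with `2m/n ≤ k ≤ λ₁`, the energy satisfies
`E(G) ≤ k + √((n−1)(2m − k²))`. The eigenvalues `λ` (with multiplicity, nonincreasing)
are specified through the factorization of the characteristic polynomial of `A(G)`. -/
theorem stmt_8 {n : ℕ} (hn : 2 ≤ n) (G : SimpleGraph (Fin n)) [DecidableRel G.Adj]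
    (hconn : G.Connected) (m : ℕ) (hm : m = G.edgeFinset.card)
    (lam : Fin n → ℝ) (hlam : Antitone lam)
    (hchar : (SimpleGraph.adjMatrix ℝ G).charpoly =
      ∏ i, (Polynomial.X - Polynomial.C (lam i)))
    (k : ℝ) (hk1 : 2 * (m : ℝ) / n ≤ k) (hk2 : k ≤ lam ⟨0, by omega⟩) :
    ∑ i, |lam i| ≤ k + Real.sqrt ((n - 1) * (2 * m - k ^ 2)) := by
  classical
  set A := G.adjMatrix ℝ with hA_def
  have hA : A.IsHermitian := by
    unfold Matrix.IsHermitian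
    rw [conjTranspose_eq_transpose_of_trivial]
    exact (SimpleGraph.isSymm_adjMatrix G)
  set U : Matrix (Fin n) (Fin n) ℝ := (hA.eigenvectorUnitary : Matrix (Fin n) (Fin n) ℝ) with hU
  set d : Fin n → ℝ := RCLike.ofReal ∘ hA.eigenvalues with hd
  have hUV : U * star U = 1 := (Matrix.mem_unitaryGroup_iff).mp (hA.eigenvectorUnitary).2
  have hVU : star U * U = 1 := (Matrix.mem_unitaryGroup_iff').mp (hA.eigenvectorUnitary).2
  have hspec : A = U * Matrix.diagonal d * star U := hA.spectral_theorem
  have hcp : A.charpoly = ∏ i, (X - C (d i)) := by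
    rw [hspec, aux_conj _ _ _ hUV hVU, aux_diag]
  have htr : Matrix.trace (Matrix.diagonal d) = Matrix.trace A := by
    rw [hspec, Matrix.trace_mul_comm, ← mul_assoc, hVU, one_mul]
  have key : A * A = U * (Matrix.diagonal d * Matrix.diagonal d) * star U := by
    conv_lhs => rw [hspec]
    calc (U * Matrix.diagonal d * star U) * (U * Matrix.diagonal d * star U)
        = U * (Matrix.diagonal d * ((star U * U) * (Matrix.diagonal d * star U))) := by
          simp only [mul_assoc]
      _ = U * (Matrix.diagonal d * Matrix.diagonal d) * star U := by
          rw [hVU, one_mul]; simp only [mul_assoc]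
  have htr2 : Matrix.trace (A * A) = Matrix.trace (Matrix.diagonal d * Matrix.diagonal d) := by
    rw [key, Matrix.trace_mul_comm, ← mul_assoc, hVU, one_mul]
  have htrA : Matrix.trace A = 0 := by simp [hA_def]
  have htrAA : Matrix.trace (A * A) = ∑ i, (G.degree i : ℝ) := by
    rw [Matrix.trace]
    exact Finset.sum_congr rfl fun i _ => by
      rw [Matrix.diag_apply, hA_def]
      exact SimpleGraph.adjMatrix_mul_self_apply_self G i
  -- degree sums
  have hdegsum : ∑ i, (G.degree i : ℝ) = 2 * m := by
    rw [← Nat.cast_sum]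
    rw [SimpleGraph.sum_degrees_eq_twice_card_edges, hm]
    push_cast; ring
  have hsum_d : ∑ i, d i = 0 := by
    have := htr; rwa [Matrix.trace_diagonal, htrA] at this
  have hsq_d : ∑ i, d i ^ 2 = 2 * m := by
    have := htr2
    rw [Matrix.diagonal_mul_diagonal, Matrix.trace_diagonal, htrAA, hdegsum] at this
    simpa [pow_two] using this.symm
  -- multiset equality between lam and d
  have hprodeq : ((univ.val.map lam).map fun a => X - C a).prod
      = ((univ.val.map d).map fun a => X - C a).prod := by
    rw [Multiset.map_map, Multiset.map_map]
    exact hchar.symm.trans hcp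
  have hms : univ.val.map lam = univ.val.map d := by
    have := congrArg Polynomial.roots hprodeq
    rwa [Polynomial.roots_multiset_prod_X_sub_C, Polynomial.roots_multiset_prod_X_sub_C] at this
  have htrans : ∀ g : ℝ → ℝ, ∑ i, g (lam i) = ∑ i, g (d i) := by
    intro g
    have h1 : ∑ i, g (lam i) = ((univ.val.map lam).map g).sum := by
      rw [Multiset.map_map]; rfl
    have h2 : ∑ i, g (d i) = ((univ.val.map d).map g).sum := by
      rw [Multiset.map_map]; rfl
    rw [h1, h2, hms]
  have hsum : ∑ i, lam i = 0 := by rw [htrans (fun x => x)]; exact hsum_d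
  have hsq : ∑ i, lam i ^ 2 = 2 * m := by rw [htrans (fun x => x ^ 2)]; exact hsq_d
  -- every degree at least 1, so n ≤ 2m
  have hdeg : ∀ v : Fin n, 1 ≤ G.degree v := by
    intro v
    have hne : ∃ u : Fin n, u ≠ v := by
      rcases Decidable.eq_or_ne v ⟨0, by omega⟩ with h | h
      · exact ⟨⟨1, by omega⟩, by rw [h]; simp [Fin.ext_iff]⟩
      · exact ⟨⟨0, by omega⟩, fun hc => h (by rw [← hc])⟩
    obtain ⟨u, hu⟩ := hne
    obtain ⟨p⟩ := hconn v u
    have : ∃ w, G.Adj v w := by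
      cases p with
      | nil => exact absurd rfl hu
      | cons h q => exact ⟨_, h⟩
    exact (SimpleGraph.degree_pos_iff_exists_adj _ _).mpr this
  have h2mn : (n : ℝ) ≤ 2 * m := by
    have hnat : (n : ℕ) ≤ 2 * m := by
      have h3 : (n : ℕ) ≤ ∑ v, G.degree v := by
        calc (n : ℕ) = ∑ _v : Fin n, 1 := by simp
          _ ≤ ∑ v, G.degree v := Finset.sum_le_sum fun v _ => hdeg v
      rwa [SimpleGraph.sum_degrees_eq_twice_card_edges, ← hm] at h3
    exact_mod_cast hnat
  have hnpos : (0 : ℝ) < n := by positivity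
  have hn2 : (2 : ℝ) ≤ n := by exact_mod_cast hn
  have hk0 : 1 ≤ k := by
    have h1 : (1 : ℝ) ≤ 2 * m / n := by rw [le_div_iff₀ hnpos]; linarith
    linarith
  set i0 : Fin n := ⟨0, by omega⟩ with hi0
  set a := lam i0 with ha_def
  have hka : k ≤ a := hk2
  have ha1 : 1 ≤ a := le_trans hk0 hka
  have hmax : ∀ i, lam i ≤ a := fun i => hlam (by simp [hi0, Fin.le_def])
  have hsq_a : a ^ 2 ≤ 2 * m := by
    rw [← hsq]
    exact Finset.single_le_sum (f := fun i => lam i ^ 2) (fun i _ => sq_nonneg _) (mem_univ i0)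
  have hk2m : k ^ 2 ≤ 2 * m := by
    have h : k * k ≤ a * a := mul_self_le_mul_self (by linarith) hka
    have h' : k ^ 2 ≤ a ^ 2 := by rw [pow_two, pow_two]; exact h
    linarith
  have hnk : 2 * (m : ℝ) ≤ n * k ^ 2 := by
    have h2 : 2 * (m : ℝ) ≤ k * n := by rwa [div_le_iff₀ hnpos] at hk1
    have hkn : (0:ℝ) ≤ n * k := mul_nonneg (le_of_lt hnpos) (by linarith)
    have h5 := mul_le_mul_of_nonneg_left hk0 hkn
    have h6 : k * n ≤ n * k ^ 2 := by
      calc k * n = n * k * 1 := by ring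
        _ ≤ n * k * k := h5
        _ = n * k ^ 2 := by ring
    linarith
  -- split the sum
  set s : Finset (Fin n) := univ.erase i0 with hs
  have hEsplit : ∑ i, |lam i| = a + ∑ i ∈ s, |lam i| := by
    rw [← Finset.add_sum_erase univ _ (mem_univ i0)]
    rw [abs_of_nonneg (by linarith : (0:ℝ) ≤ a)]
  have hcards : (#s : ℝ) = n - 1 := by
    rw [hs, Finset.card_erase_of_mem (mem_univ i0), Finset.card_univ, Fintype.card_fin]
    have : 1 ≤ n := by omega
    push_cast [this]; ring
  have hsq_s : ∑ i ∈ s, |lam i| ^ 2 = 2 * m - a ^ 2 := by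
    have h1 : ∑ i ∈ s, lam i ^ 2 = (∑ i, lam i ^ 2) - lam i0 ^ 2 :=
      Finset.sum_erase_eq_sub (mem_univ i0)
    calc ∑ i ∈ s, |lam i| ^ 2 = ∑ i ∈ s, lam i ^ 2 := by
          exact Finset.sum_congr rfl fun i _ => sq_abs _
      _ = 2 * m - a ^ 2 := by rw [h1, hsq]
  have hT2 : (∑ i ∈ s, |lam i|) ^ 2 ≤ (n - 1) * (2 * m - a ^ 2) := by
    calc (∑ i ∈ s, |lam i|) ^ 2 ≤ #s * ∑ i ∈ s, |lam i| ^ 2 := sq_sum_le_card_mul_sum_sq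
      _ = (n - 1) * (2 * m - a ^ 2) := by rw [hcards, hsq_s]
  have hTnn : (0:ℝ) ≤ ∑ i ∈ s, |lam i| := Finset.sum_nonneg fun i _ => abs_nonneg _
  have hT : ∑ i ∈ s, |lam i| ≤ Real.sqrt ((n - 1) * (2 * m - a ^ 2)) := by
    rw [show (∑ i ∈ s, |lam i|) = Real.sqrt ((∑ i ∈ s, |lam i|) ^ 2) from
      (Real.sqrt_sq hTnn).symm]
    exact Real.sqrt_le_sqrt hT2
  -- final monotonicity
  set x := Real.sqrt ((n - 1) * (2 * m - a ^ 2)) with hx_def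
  set y := Real.sqrt ((n - 1) * (2 * m - k ^ 2)) with hy_def
  have hx0 : 0 ≤ x := Real.sqrt_nonneg _
  have hy0 : 0 ≤ y := Real.sqrt_nonneg _
  have hx2 : x ^ 2 = (n - 1) * (2 * m - a ^ 2) :=
    Real.sq_sqrt (mul_nonneg (by linarith) (by linarith))
  have hy2 : y ^ 2 = (n - 1) * (2 * m - k ^ 2) :=
    Real.sq_sqrt (mul_nonneg (by linarith) (by linarith))
  have hfinal : a + x ≤ k + y :=
    aux_mono (n : ℝ) (m : ℝ) a k x y hn2 hk0 hka hsq_a hnk hx0 hy0 hx2 hy2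
  calc ∑ i, |lam i| = a + ∑ i ∈ s, |lam i| := hEsplit
    _ ≤ a + x := by linarith
    _ ≤ k + y := hfinal
end

section
/- Let G be a connected bipartite simple undirected graph on n ≥ 3 vertices with m edges, and let λ₁ be the largest eigenvalue of its adjacency matrix A(G). If k is a real number with 2m/n ≤ k ≤ λ₁, then the energy of G satisfies E(G) ≤ 2k + √( (n−2)(2m − 2k²) ). -/
/-!
Conjugating `A(G)` by the diagonal `±1` matrix of a 2-colouring turns it into `-A(G)`, so the
spectrum is symmetric and `λₙ = -λ₁`. The `λᵢ²` are the eigenvalues of `A(G)²`, whose trace is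
`2m`. Cauchy–Schwarz on the `n - 2` remaining eigenvalues gives
`E(G) ≤ 2λ₁ + √((n - 2)(2m - 2λ₁²))`, and the right-hand side decreases when `λ₁` is lowered to
`k`, because connectivity gives `n ≤ 2m`, hence `k ≥ 1` and `2m ≤ n k²`.
-/

open Polynomial Finset

namespace Matrix

variable {ι R : Type*} [Fintype ι] [DecidableEq ι]

theorem eval_charpoly_neg [CommRing R] (M : Matrix ι ι R) (x : R) :
    (-M).charpoly.eval x = (-1) ^ Fintype.card ι * M.charpoly.eval (-x) := by
  rw [eval_charpoly, eval_charpoly, ← det_smul, neg_smul, one_smul, map_neg]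
  congr 1
  abel

theorem eval_charpoly_mul_self [CommRing R] (M : Matrix ι ι R) (x : R) :
    (M * M).charpoly.eval (x ^ 2) = M.charpoly.eval x * (-M).charpoly.eval x := by
  rw [eval_charpoly, eval_charpoly, eval_charpoly, ← det_mul, map_pow]
  have hcomm : scalar ι x * M = M * scalar ι x := scalar_commute x (Commute.all x) M
  congr 1
  rw [sub_mul, mul_sub, mul_sub, mul_neg, mul_neg, ← hcomm, sq]
  abel

theorem trace_eq_sum_of_charpoly_eq_prod [CommRing R] {M : Matrix ι ι R} {μ : ι → R}
    (h : M.charpoly = ∏ i, (X - C (μ i))) : M.trace = ∑ i, μ i := by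
  rw [trace_eq_neg_charpoly_nextCoeff, h, prod_X_sub_C_nextCoeff, neg_neg]

theorem exists_eq_neg_of_charpoly_neg_eq [CommRing R] [IsDomain R] {M : Matrix ι ι R}
    {μ : ι → R} (h : M.charpoly = ∏ i, (X - C (μ i))) (hneg : (-M).charpoly = M.charpoly)
    (i : ι) : ∃ j, μ j = -μ i := by
  have hroot : M.charpoly.eval (μ i) = 0 := by
    rw [h, eval_prod]
    exact prod_eq_zero (mem_univ i) (by simp)
  have hroot' : M.charpoly.eval (-μ i) = 0 := by
    have := eval_charpoly_neg M (μ i)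
    rwa [hneg, hroot, zero_eq_mul, or_iff_right (pow_ne_zero _ (neg_ne_zero.2 one_ne_zero))] at this
  rw [h, eval_prod, prod_eq_zero_iff] at hroot'
  obtain ⟨j, -, hj⟩ := hroot'
  exact ⟨j, by simpa [sub_eq_zero, eq_comm] using hj⟩

theorem charpoly_mul_self_eq_prod {M : Matrix ι ι ℝ} {μ : ι → ℝ}
    (h : M.charpoly = ∏ i, (X - C (μ i))) :
    (M * M).charpoly = ∏ i, (X - C (μ i ^ 2)) := by
  refine eq_of_infinite_eval_eq _ _ ((Set.Ici_infinite (0 : ℝ)).mono fun x (hx : 0 ≤ x) => ?_)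
  rw [Set.mem_ofPred_eq, ← Real.sq_sqrt hx, eval_charpoly_mul_self, eval_charpoly_neg, h]
  simp only [eval_prod, eval_sub, eval_X, eval_C]
  rw [← Finset.card_univ, ← Finset.prod_const, ← Finset.prod_mul_distrib,
    ← Finset.prod_mul_distrib]
  refine Finset.prod_congr rfl fun i _ => ?_
  ring

end Matrix

namespace SimpleGraph

variable {V R : Type*} [Fintype V] (G : SimpleGraph V) [DecidableRel G.Adj]

theorem trace_adjMatrix_mul_self [NonAssocSemiring R] :
    (G.adjMatrix R * G.adjMatrix R).trace = 2 * #G.edgeFinset := by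
  simp only [Matrix.trace, Matrix.diag, adjMatrix_mul_self_apply_self]
  rw [← Nat.cast_sum, G.sum_degrees_eq_twice_card_edges, Nat.cast_mul, Nat.cast_two]

theorem charpoly_neg_adjMatrix_of_colorable_two [DecidableEq V] [CommRing R]
    (hG : G.Colorable 2) : (-G.adjMatrix R).charpoly = (G.adjMatrix R).charpoly := by
  obtain ⟨c⟩ := hG
  set D : Matrix V V R := Matrix.diagonal fun v => (-1) ^ (c v : ℕ)
  have hDD : D * D = 1 := by
    simp [D, Matrix.diagonal_mul_diagonal, ← pow_add, ← two_mul, pow_mul]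
  have hDAD : D * G.adjMatrix R * D = -G.adjMatrix R := by
    ext v w
    rw [Matrix.mul_diagonal, Matrix.diagonal_mul, Matrix.neg_apply]
    by_cases hvw : G.Adj v w
    · have hc := c.valid hvw
      have hsum : (c v : ℕ) + c w = 1 := by
        have := Fin.val_ne_of_ne hc
        omega
      rw [adjMatrix_apply, if_pos hvw, mul_one, ← pow_add, hsum, pow_one]
    · rw [adjMatrix_apply, if_neg hvw]
      simp
  rw [← hDAD, Matrix.mul_assoc, Matrix.charpoly_mul_comm, Matrix.mul_assoc, hDD, Matrix.mul_one]

variable {G} in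
theorem Connected.card_le_two_mul_card_edgeFinset (hG : G.Connected)
    (hV : 2 ≤ Fintype.card V) : Fintype.card V ≤ 2 * #G.edgeFinset := by
  have := hG.card_vert_le_card_edgeSet_add_one
  rw [Nat.card_eq_fintype_card, Nat.card_eq_fintype_card, ← edgeFinset_card] at this
  omega

end SimpleGraph

theorem eq_neg_of_forall_exists_eq_neg {ι α : Type*} [AddCommGroup α] [LinearOrder α]
    [IsOrderedAddMonoid α] {μ : ι → α} {i₀ i₁ : ι}
    (hmax : ∀ j, μ j ≤ μ i₀) (hmin : ∀ j, μ i₁ ≤ μ j) (hsymm : ∀ i, ∃ j, μ j = -μ i) :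
    μ i₁ = -μ i₀ := by
  obtain ⟨j₀, hj₀⟩ := hsymm i₀
  obtain ⟨j₁, hj₁⟩ := hsymm i₁
  exact le_antisymm (hj₀ ▸ hmin j₀) (neg_le.1 (hj₁ ▸ hmax j₁))

theorem sum_abs_le_of_eq_neg {ι : Type*} [Fintype ι] [DecidableEq ι] (μ : ι → ℝ) {i j : ι}
    (hij : i ≠ j) (hj : μ j = -μ i) :
    ∑ l, |μ l| ≤ 2 * |μ i| + √((Fintype.card ι - 2) * (∑ l, μ l ^ 2 - 2 * μ i ^ 2)) := by
  have hsplit (f : ι → ℝ) : ∑ l, f l = f i + f j + ∑ l ∈ {i, j}ᶜ, f l := by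
    rw [← sum_pair hij, sum_add_sum_compl]
  have hcard : (#({i, j}ᶜ : Finset ι) : ℝ) = Fintype.card ι - 2 := by
    rw [card_compl, Nat.cast_sub (card_le_univ _), card_pair hij, Nat.cast_two]
  have hcs := sq_sum_le_card_mul_sum_sq (s := {i, j}ᶜ) (f := fun l => |μ l|)
  simp only [sq_abs, hcard] at hcs
  have hsq : ∑ l, μ l ^ 2 - 2 * μ i ^ 2 = ∑ l ∈ {i, j}ᶜ, μ l ^ 2 := by
    rw [hsplit fun l => μ l ^ 2, hj, neg_sq]
    ring
  rw [hsplit, hj, abs_neg, hsq]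
  linarith [le_abs_self (∑ l ∈ {i, j}ᶜ, |μ l|), Real.abs_le_sqrt hcs]

theorem two_mul_add_sqrt_le {c S k a : ℝ} (hc : 0 < c) (hk : 0 < k) (hka : k ≤ a)
    (hS : S ≤ (c + 2) * k ^ 2) (ha : 2 * a ^ 2 ≤ S) :
    2 * a + √(c * (S - 2 * a ^ 2)) ≤ 2 * k + √(c * (S - 2 * k ^ 2)) := by
  have hka2 : k ^ 2 ≤ a ^ 2 := pow_le_pow_left₀ hk.le hka 2
  set u := √(c * (S - 2 * k ^ 2))
  set v := √(c * (S - 2 * a ^ 2))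
  have hu2 : u ^ 2 = c * (S - 2 * k ^ 2) := Real.sq_sqrt (mul_nonneg hc.le (by linarith))
  have hv2 : v ^ 2 = c * (S - 2 * a ^ 2) := Real.sq_sqrt (mul_nonneg hc.le (by linarith))
  have huk : u ≤ c * k :=
    Real.sqrt_le_iff.2 ⟨by positivity, by nlinarith [mul_le_mul_of_nonneg_left hS hc.le]⟩
  have hva : v ≤ c * a := Real.sqrt_le_iff.2 ⟨mul_nonneg hc.le (hk.le.trans hka),
    by nlinarith [mul_le_mul_of_nonneg_left hS hc.le, mul_le_mul_of_nonneg_left hka2 hc.le]⟩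
  -- `u² - v² = 2c(a - k)(a + k)` while `u + v ≤ c(a + k)`
  have key : 0 ≤ (u + v) * (u - v - 2 * (a - k)) := by nlinarith
  have hu0 : 0 ≤ u := Real.sqrt_nonneg _
  have hv0 : 0 ≤ v := Real.sqrt_nonneg _
  rcases (add_nonneg hu0 hv0).eq_or_lt with h0 | hpos
  · have hu : u = 0 := by linarith
    have hv : v = 0 := by linarith
    have hsq : c * (a ^ 2 - k ^ 2) = 0 := by
      rw [hu] at hu2; rw [hv] at hv2
      linear_combination (hv2 - hu2) / 2
    have hak : a = k := by
      rw [mul_eq_zero, or_iff_right hc.ne', sub_eq_zero] at hsq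
      exact (sq_eq_sq₀ (hk.le.trans hka) hk.le).1 hsq
    rw [hak, hu, hv]
  · linarith [(mul_nonneg_iff_of_pos_left hpos).1 key]

/-- For a connected bipartite graph `G` on `n ≥ 3` vertices with `m` edges, largest
adjacency eigenvalue `λ₁`, and any real `k` with `2m/n ≤ k ≤ λ₁`, the energy satisfies
`E(G) ≤ 2k + √((n−2)(2m − 2k²))`. The eigenvalues `λ` (with multiplicity, nonincreasing)
are specified through the factorization of the characteristic polynomial of `A(G)`;
bipartiteness is expressed as 2-colorability. -/
theorem stmt_9 {n : ℕ} (hn : 3 ≤ n) (G : SimpleGraph (Fin n)) [DecidableRel G.Adj]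
    (hconn : G.Connected) (hbip : G.Colorable 2) (m : ℕ) (hm : m = G.edgeFinset.card)
    (lam : Fin n → ℝ) (hlam : Antitone lam)
    (hchar : (SimpleGraph.adjMatrix ℝ G).charpoly =
      ∏ i, (Polynomial.X - Polynomial.C (lam i)))
    (k : ℝ) (hk1 : 2 * (m : ℝ) / n ≤ k) (hk2 : k ≤ lam ⟨0, by omega⟩) :
    ∑ i, |lam i| ≤ 2 * k + Real.sqrt ((n - 2) * (2 * m - 2 * k ^ 2)) := by
  set i₀ : Fin n := ⟨0, by omega⟩
  set i₁ : Fin n := ⟨n - 1, by omega⟩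
  have hi : i₀ ≠ i₁ := Fin.ne_of_val_ne (show 0 ≠ n - 1 by omega)
  have hlast : lam i₁ = -lam i₀ :=
    eq_neg_of_forall_exists_eq_neg (fun j => hlam (Fin.le_iff_val_le_val.2 (Nat.zero_le _)))
      (fun j => hlam (Fin.le_iff_val_le_val.2 (show (j : ℕ) ≤ n - 1 by omega)))
      (Matrix.exists_eq_neg_of_charpoly_neg_eq hchar
        (G.charpoly_neg_adjMatrix_of_colorable_two hbip))
  have hsq : ∑ i, lam i ^ 2 = 2 * m := by
    rw [← Matrix.trace_eq_sum_of_charpoly_eq_prod (Matrix.charpoly_mul_self_eq_prod hchar),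
      G.trace_adjMatrix_mul_self, hm]
  have hpair : 2 * lam i₀ ^ 2 ≤ 2 * m := by
    have := sum_le_univ_sum_of_nonneg (s := {i₀, i₁}) (f := fun i => lam i ^ 2)
      fun _ => sq_nonneg _
    rwa [sum_pair hi, hlast, neg_sq, ← two_mul, hsq] at this
  have hnm : (n : ℝ) ≤ 2 * m := by
    have := hconn.card_le_two_mul_card_edgeFinset (by rw [Fintype.card_fin]; omega)
    rw [Fintype.card_fin, ← hm] at this
    exact_mod_cast this
  have hn3 : (3 : ℝ) ≤ n := by exact_mod_cast hn
  have hn0 : (0 : ℝ) < n := by linarith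
  have hk : 1 ≤ k := ((one_le_div hn0).2 hnm).trans hk1
  have hS : 2 * (m : ℝ) ≤ (n - 2 + 2) * k ^ 2 := by
    rw [div_le_iff₀ hn0] at hk1
    nlinarith
  calc ∑ i, |lam i| ≤ 2 * |lam i₀| + √((n - 2) * (∑ i, lam i ^ 2 - 2 * lam i₀ ^ 2)) := by
        simpa only [Fintype.card_fin] using sum_abs_le_of_eq_neg lam hi hlast
    _ = 2 * lam i₀ + √((n - 2) * (2 * m - 2 * lam i₀ ^ 2)) := by
        rw [abs_of_pos (by linarith), hsq]
    _ ≤ 2 * k + √((n - 2) * (2 * m - 2 * k ^ 2)) :=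
        two_mul_add_sqrt_le (by linarith) (by linarith) hk2 hS hpair
end

section
/- Let G be a connected simple undirected graph on n ≥ 4 vertices with m edges and degree sequence d₁ ≥ d₂ ≥ … ≥ d_n, let μ₁ ≥ μ₂ ≥ … ≥ μ_n = 0 be the eigenvalues of its Laplacian matrix, and assume μ₁ ≥ 1 + d₁ and μ₂ ≥ d₂ (both of which hold for every connected graph) and (n−2) d₂ ≥ 2m − 1 − d₁. Then for every real α with α > 1 or α < 0, s_α(G) ≥ (1+d₁)^α + d₂^α + (2m−1−d₁−d₂)^α / (n−3)^{α−1}, while for 0 < α < 1, s_α(G) ≤ (1+d₁)^α + d₂^α + (2m−1−d₁−d₂)^α / (n−3)^{α−1}. -/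
/-!
Since `G` is connected, exactly one Laplacian eigenvalue vanishes, so `μ₃, …, μ_{n-1}` are `n - 3`
positive numbers with sum `T = 2m - μ₁ - μ₂`. For convex `f` (here `x ^ α` with `α > 1` or
`α < 0`), Jensen gives `∑_{i ≥ 3} f(μᵢ) ≥ (n - 3) f(T / (n - 3)) = T ^ α / (n - 3) ^ (α - 1)`.
Lowering `μ₁` to `1 + d₁` and then `μ₂` to `d₂`, spreading the freed mass evenly over the `n - 3`
averaged values, does not increase `f(μ₁) + f(μ₂) + (n - 3) f(average)`: comparing secant slopes
of `f`, this holds as long as the average stays below the point being lowered, which is what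
`(n - 2) d₂ ≥ 2m - 1 - d₁` and `d₂ ≤ d₁` guarantee. For `0 < α < 1`, `f` is concave and every
inequality reverses.
-/

open Finset Real Polynomial

namespace Matrix.IsHermitian

variable {ι : Type*} [Fintype ι] [DecidableEq ι] {A : Matrix ι ι ℝ}

theorem map_univ_eq_map_eigenvalues (hA : A.IsHermitian) {μ : ι → ℝ}
    (hμ : A.charpoly = ∏ i, (X - C (μ i))) : univ.val.map μ = univ.val.map hA.eigenvalues := by
  have h := hA.roots_charpoly_eq_eigenvalues
  rw [hμ, roots_prod _ _ (prod_ne_zero_iff.2 fun i _ ↦ X_sub_C_ne_zero (μ i))] at h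
  simpa using h

theorem card_eigenvalues_eq_zero (hA : A.IsHermitian) :
    #{i | hA.eigenvalues i = 0} = Module.finrank ℝ (LinearMap.ker A.toLin') := by
  have hrank := hA.rank_eq_card_non_zero_eigs
  have hnullity := LinearMap.finrank_range_add_finrank_ker A.toLin'
  rw [Module.finrank_fintype_fun_eq_card] at hnullity
  rw [Matrix.rank, ← Matrix.toLin'_apply', Fintype.card_subtype_compl,
    Fintype.card_subtype] at hrank
  have := card_le_univ {i | hA.eigenvalues i = 0}
  omega

end Matrix.IsHermitian

namespace SimpleGraph

variable {V : Type*} [Fintype V] [DecidableEq V] {G : SimpleGraph V} [DecidableRel G.Adj]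
  {μ : V → ℝ}

variable (G) in
theorem trace_lapMatrix : (G.lapMatrix ℝ).trace = 2 * #G.edgeFinset := by
  rw [lapMatrix, Matrix.trace_sub, trace_adjMatrix, degMatrix, Matrix.trace_diagonal, sub_zero]
  exact_mod_cast G.sum_degrees_eq_twice_card_edges

theorem nonneg_of_charpoly_lapMatrix_eq (hμ : (G.lapMatrix ℝ).charpoly = ∏ i, (X - C (μ i)))
    (i : V) : 0 ≤ μ i := by
  have hmem : μ i ∈ univ.val.map μ := Multiset.mem_map_of_mem μ (mem_univ i)
  rw [(isHermitian_lapMatrix ℝ G).map_univ_eq_map_eigenvalues hμ] at hmem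
  obtain ⟨j, -, hj⟩ := Multiset.mem_map.1 hmem
  exact hj ▸ (posSemidef_lapMatrix ℝ G).eigenvalues_nonneg j

theorem sum_of_charpoly_lapMatrix_eq (hμ : (G.lapMatrix ℝ).charpoly = ∏ i, (X - C (μ i))) :
    ∑ i, μ i = 2 * #G.edgeFinset := by
  have hA := isHermitian_lapMatrix ℝ G
  have h := congr_arg Multiset.sum (hA.map_univ_eq_map_eigenvalues hμ)
  rw [← sum_eq_multiset_sum, ← sum_eq_multiset_sum] at h
  rw [h, ← trace_lapMatrix, hA.trace_eq_sum_eigenvalues, RCLike.ofReal_real_eq_id]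
  rfl

theorem card_zero_of_charpoly_lapMatrix_eq
    (hμ : (G.lapMatrix ℝ).charpoly = ∏ i, (X - C (μ i))) :
    #{i | μ i = 0} = Fintype.card G.ConnectedComponent := by
  have hA := isHermitian_lapMatrix ℝ G
  have h := congr_arg (Multiset.count 0) (hA.map_univ_eq_map_eigenvalues hμ)
  rw [Multiset.count_map, Multiset.count_map] at h
  simp only [@eq_comm ℝ 0] at h
  rw [card_connectedComponent_eq_finrank_ker_toLin'_lapMatrix, ← hA.card_eigenvalues_eq_zero]
  simpa only [card_def, filter_val] using h

theorem Connected.pos_of_charpoly_lapMatrix_eq (hG : G.Connected)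
    (hμ : (G.lapMatrix ℝ).charpoly = ∏ i, (X - C (μ i))) {i j : V} (hj : μ j = 0) (hij : i ≠ j) :
    0 < μ i := by
  refine (nonneg_of_charpoly_lapMatrix_eq hμ i).lt_of_ne fun hi ↦ hij ?_
  have : #{i | μ i = 0} ≤ 1 := (card_zero_of_charpoly_lapMatrix_eq hμ).trans_le
    (Fintype.card_le_one_iff_subsingleton.2 hG.preconnected.subsingleton_connectedComponent)
  exact card_le_one.1 this i (by simp [hi]) j (by simp [hj])

end SimpleGraph

theorem Fin.card_filter_two_le_lt_sub_one (n : ℕ) :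
    #(univ.filter fun i : Fin n ↦ 2 ≤ (i : ℕ) ∧ (i : ℕ) < n - 1) = n - 3 := by
  rw [← card_map Fin.valEmbedding]
  have : (univ.filter fun i : Fin n ↦ 2 ≤ (i : ℕ) ∧ (i : ℕ) < n - 1).map Fin.valEmbedding =
      Ico 2 (n - 1) := by
    ext k
    simp only [mem_map, mem_filter, mem_univ, true_and, Fin.valEmbedding_apply, mem_Ico]
    exact ⟨fun ⟨i, hi, hik⟩ ↦ hik ▸ hi, fun hk ↦ ⟨⟨k, by omega⟩, hk, rfl⟩⟩
  rw [this, Nat.card_Ico]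
  omega

theorem Fin.sum_filter_lt_sub_one {M : Type*} [AddCommMonoid M] {n : ℕ} (hn : 3 ≤ n)
    (f : Fin n → M) :
    ∑ i ∈ univ.filter (fun i : Fin n ↦ (i : ℕ) < n - 1), f i =
      f ⟨0, by omega⟩ + f ⟨1, by omega⟩ +
        ∑ i ∈ univ.filter (fun i : Fin n ↦ 2 ≤ (i : ℕ) ∧ (i : ℕ) < n - 1), f i := by
  have : univ.filter (fun i : Fin n ↦ (i : ℕ) < n - 1) = insert ⟨0, by omega⟩
      (insert ⟨1, by omega⟩ (univ.filter fun i : Fin n ↦ 2 ≤ (i : ℕ) ∧ (i : ℕ) < n - 1)) := by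
    ext i
    simp only [mem_filter, mem_univ, true_and, mem_insert, Fin.ext_iff]
    omega
  rw [this, sum_insert, sum_insert, add_assoc] <;> simp [Fin.ext_iff]

theorem Convex.sum_div_card_mem {ι : Type*} {D : Set ℝ} (hD : Convex ℝ D) {s : Finset ι}
    (hs : s.Nonempty) {g : ι → ℝ} (hg : ∀ i ∈ s, g i ∈ D) : (∑ i ∈ s, g i) / #s ∈ D := by
  have hcard : (#s : ℝ) ≠ 0 := by positivity
  convert hD.sum_mem (w := fun _ ↦ (#s : ℝ)⁻¹) (fun _ _ ↦ by positivity)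
    (by simp [hcard]) hg using 1
  simp [← Finset.mul_sum, div_eq_inv_mul]

theorem ConvexOn.card_mul_map_sum_div_card_le {ι : Type*} {D : Set ℝ} {f : ℝ → ℝ}
    (hf : ConvexOn ℝ D f) {s : Finset ι} (hs : s.Nonempty) {g : ι → ℝ}
    (hg : ∀ i ∈ s, g i ∈ D) : #s * f ((∑ i ∈ s, g i) / #s) ≤ ∑ i ∈ s, f (g i) := by
  have hcard : (0 : ℝ) < #s := by positivity
  have h := hf.map_sum_le (w := fun _ ↦ (#s : ℝ)⁻¹) (fun _ _ ↦ by positivity)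
    (by simp [hcard.ne']) hg
  simp only [smul_eq_mul, ← Finset.mul_sum] at h
  rwa [inv_mul_eq_div, inv_mul_eq_div, le_div_iff₀ hcard, mul_comm] at h

theorem ConvexOn.slope_le_slope {D : Set ℝ} {f : ℝ → ℝ} (hf : ConvexOn ℝ D f) {p q a b : ℝ}
    (hp : p ∈ D) (hq : q ∈ D) (ha : a ∈ D) (hb : b ∈ D) (hpq : p < q) (hab : a < b)
    (hpa : p ≤ a) (hqb : q ≤ b) :
    (f q - f p) / (q - p) ≤ (f b - f a) / (b - a) :=
  calc (f q - f p) / (q - p) ≤ (f b - f p) / (b - p) :=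
        hf.secant_mono hp hq hb hpq.ne' (by linarith) hqb
    _ = (f p - f b) / (p - b) := by rw [← neg_div_neg_eq]; ring_nf
    _ ≤ (f a - f b) / (a - b) := hf.secant_mono hb hp ha (by linarith) hab.ne hpa
    _ = (f b - f a) / (b - a) := by rw [← neg_div_neg_eq]; ring_nf

/-- Raising a point `a` to `b` while `k` points sitting at `q ≤ a` drop to `p` with the same
total mass does not decrease `∑ f`. -/
theorem ConvexOn.add_mul_le_add_mul_of_mass_transfer {D : Set ℝ} {f : ℝ → ℝ}
    (hf : ConvexOn ℝ D f) {k p q a b : ℝ} (hk : 0 ≤ k) (hp : p ∈ D) (ha : a ∈ D) (hb : b ∈ D)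
    (hpq : p ≤ q) (hqa : q ≤ a) (hab : a ≤ b) (hmass : k * (q - p) = b - a) :
    f a + k * f q ≤ f b + k * f p := by
  have hq : q ∈ D := hf.1.ordConnected.out hp ha ⟨hpq, hqa⟩
  rcases hab.eq_or_lt with rfl | hab
  · rcases mul_eq_zero.1 (hmass.trans (sub_self a)) with rfl | hqp
    · simp
    · rw [sub_eq_zero.1 hqp]
  have hpq : p < q := hpq.lt_of_ne fun h ↦ by rw [h, sub_self, mul_zero] at hmass; linarith
  have hslope := hf.slope_le_slope hp hq ha hb hpq hab (hpq.le.trans hqa) (hqa.trans hab.le)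
  rw [div_le_div_iff₀ (sub_pos.2 hpq) (sub_pos.2 hab), ← hmass, ← mul_assoc,
    mul_comm _ k] at hslope
  linarith [le_of_mul_le_mul_right hslope (sub_pos.2 hpq)]

theorem ConvexOn.add_add_card_mul_le {ι : Type*} {D : Set ℝ} {f : ℝ → ℝ}
    (hf : ConvexOn ℝ D f) {s : Finset ι} (hs : s.Nonempty) {g : ι → ℝ}
    (hg : ∀ i ∈ s, g i ∈ D) {a b x y : ℝ} (ha : a ∈ D) (hb : b ∈ D) (hx : x ∈ D) (hy : y ∈ D)
    (hax : a ≤ x) (hby : b ≤ y) (hba : b ≤ a)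
    (hcon : x + y + ∑ i ∈ s, g i - a - b ≤ #s * b) :
    f a + f b + #s * f ((x + y + ∑ i ∈ s, g i - a - b) / #s) ≤
      f x + f y + ∑ i ∈ s, f (g i) := by
  set k : ℝ := (#s : ℝ)
  set t := ∑ i ∈ s, g i
  have hk : 0 < k := by positivity
  have hmean : t / k ∈ D := hf.1.sum_div_card_mem hs hg
  have hmid_le : (t + (x - a)) / k ≤ a := by
    rw [div_le_iff₀ hk]; linarith [mul_le_mul_of_nonneg_left hba hk.le]
  have hmid : (t + (x - a)) / k ∈ D :=
    hf.1.ordConnected.out hmean ha ⟨div_le_div_of_nonneg_right (by linarith) hk.le, hmid_le⟩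
  have hjensen : k * f (t / k) ≤ ∑ i ∈ s, f (g i) := hf.card_mul_map_sum_div_card_le hs hg
  have hx_to_a := hf.add_mul_le_add_mul_of_mass_transfer hk.le hmean ha hx
    (div_le_div_of_nonneg_right (by linarith) hk.le) hmid_le hax (by field_simp; ring)
  have hy_to_b := hf.add_mul_le_add_mul_of_mass_transfer (q := (t + (x - a) + (y - b)) / k)
    hk.le hmid hb hy (div_le_div_of_nonneg_right (by linarith) hk.le)
    (by rw [div_le_iff₀ hk]; linarith) hby (by field_simp; ring)
  rw [show (t + (x - a) + (y - b)) / k = (x + y + t - a - b) / k by ring] at hy_to_b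
  linarith

theorem ConcaveOn.le_add_add_card_mul {ι : Type*} {D : Set ℝ} {f : ℝ → ℝ}
    (hf : ConcaveOn ℝ D f) {s : Finset ι} (hs : s.Nonempty) {g : ι → ℝ}
    (hg : ∀ i ∈ s, g i ∈ D) {a b x y : ℝ} (ha : a ∈ D) (hb : b ∈ D) (hx : x ∈ D) (hy : y ∈ D)
    (hax : a ≤ x) (hby : b ≤ y) (hba : b ≤ a)
    (hcon : x + y + ∑ i ∈ s, g i - a - b ≤ #s * b) :
    f x + f y + ∑ i ∈ s, f (g i) ≤
      f a + f b + #s * f ((x + y + ∑ i ∈ s, g i - a - b) / #s) := by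
  have h := hf.neg.add_add_card_mul_le hs hg ha hb hx hy hax hby hba hcon
  simp only [Pi.neg_apply, sum_neg_distrib, mul_neg] at h
  linarith

theorem convexOn_rpow_of_neg {p : ℝ} (hp : p < 0) : ConvexOn ℝ (Set.Ioi 0) fun x : ℝ ↦ x ^ p := by
  refine ⟨convex_Ioi 0, fun x hx y hy a b ha hb hab ↦ ?_⟩
  have hxy : a • x + b • y ∈ Set.Ioi (0 : ℝ) := convex_Ioi 0 hx hy ha hb hab
  simp only [smul_eq_mul] at hxy ⊢
  rw [rpow_def_of_pos hx, rpow_def_of_pos hy, rpow_def_of_pos hxy]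
  calc exp (log (a * x + b * y) * p) ≤ exp ((a * log x + b * log y) * p) :=
        exp_le_exp.2 <| mul_le_mul_of_nonpos_right
          (strictConcaveOn_log_Ioi.concaveOn.2 hx hy ha hb hab) hp.le
    _ = exp (a * (log x * p) + b * (log y * p)) := by ring_nf
    _ ≤ a * exp (log x * p) + b * exp (log y * p) :=
        convexOn_exp.2 (Set.mem_univ _) (Set.mem_univ _) ha hb hab

theorem Real.mul_div_rpow_eq_rpow_div_rpow_sub_one {k u : ℝ} (hk : 0 < k) (hu : 0 ≤ u)
    (α : ℝ) : k * (u / k) ^ α = u ^ α / k ^ (α - 1) := by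
  rw [div_rpow hu hk.le, rpow_sub hk, rpow_one]
  field_simp

section RpowBlock

variable {ι : Type*} {s : Finset ι} {g : ι → ℝ} {a b x y α : ℝ}

theorem Real.rpow_add_rpow_add_rpow_div_card_le (hα : 1 < α ∨ α < 0) (hs : s.Nonempty)
    (hg : ∀ i ∈ s, 0 < g i) (hb : 0 < b) (hax : a ≤ x) (hby : b ≤ y) (hba : b ≤ a)
    (hcon : x + y + ∑ i ∈ s, g i - a - b ≤ #s * b) :
    a ^ α + b ^ α + (x + y + ∑ i ∈ s, g i - a - b) ^ α / (#s : ℝ) ^ (α - 1) ≤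
      x ^ α + y ^ α + ∑ i ∈ s, g i ^ α := by
  have hf : ConvexOn ℝ (Set.Ioi 0) fun x : ℝ ↦ x ^ α := hα.elim
    (fun h ↦ (convexOn_rpow h.le).subset Set.Ioi_subset_Ici_self (convex_Ioi 0))
    convexOn_rpow_of_neg
  have hsum : 0 < ∑ i ∈ s, g i := sum_pos hg hs
  rw [← mul_div_rpow_eq_rpow_div_rpow_sub_one (by positivity) (by linarith)]
  exact hf.add_add_card_mul_le hs hg (hb.trans_le hba) hb (Set.mem_Ioi.2 (by linarith))
    (Set.mem_Ioi.2 (by linarith)) hax hby hba hcon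

theorem Real.rpow_add_rpow_add_rpow_div_card_ge (hα₀ : 0 < α) (hα₁ : α < 1) (hs : s.Nonempty)
    (hg : ∀ i ∈ s, 0 < g i) (hb : 0 < b) (hax : a ≤ x) (hby : b ≤ y) (hba : b ≤ a)
    (hcon : x + y + ∑ i ∈ s, g i - a - b ≤ #s * b) :
    x ^ α + y ^ α + ∑ i ∈ s, g i ^ α ≤
      a ^ α + b ^ α + (x + y + ∑ i ∈ s, g i - a - b) ^ α / (#s : ℝ) ^ (α - 1) := by
  have hsum : 0 < ∑ i ∈ s, g i := sum_pos hg hs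
  rw [← mul_div_rpow_eq_rpow_div_rpow_sub_one (by positivity) (by linarith)]
  have hf : ConcaveOn ℝ (Set.Ioi 0) fun x : ℝ ↦ x ^ α :=
    (concaveOn_rpow hα₀.le hα₁.le).subset Set.Ioi_subset_Ici_self (convex_Ioi 0)
  exact hf.le_add_add_card_mul hs hg (hb.trans_le hba) hb (Set.mem_Ioi.2 (by linarith))
    (Set.mem_Ioi.2 (by linarith)) hax hby hba hcon

end RpowBlock

/-- For a connected graph `G` on `n ≥ 4` vertices with `m` edges, nonincreasing degree
sequence `d` (a rearrangement of the vertex degrees), nonincreasing Laplacian eigenvalues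
`μ₁ ≥ … ≥ μ_n = 0` with `μ₁ ≥ 1 + d₁`, `μ₂ ≥ d₂`, and `(n−2) d₂ ≥ 2m − 1 − d₁`: if
`α > 1` or `α < 0` then `s_α(G) ≥ (1+d₁)^α + d₂^α + (2m−1−d₁−d₂)^α/(n−3)^{α−1}`, while
for `0 < α < 1` the inequality is reversed. -/
theorem stmt_11 {n : ℕ} (hn : 4 ≤ n) (G : SimpleGraph (Fin n)) [DecidableRel G.Adj]
    (hconn : G.Connected) (m : ℕ) (hm : m = G.edgeFinset.card)
    (d : Fin n → ℕ) (hda : Antitone d)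
    (hdseq : ∃ σ : Equiv.Perm (Fin n), ∀ i, d i = G.degree (σ i))
    (μ : Fin n → ℝ)
    (hchar : (SimpleGraph.lapMatrix ℝ G).charpoly =
      ∏ i, (Polynomial.X - Polynomial.C (μ i)))
    (hμn : μ ⟨n - 1, by omega⟩ = 0)
    (hμ1 : (1 : ℝ) + d ⟨0, by omega⟩ ≤ μ ⟨0, by omega⟩)
    (hμ2 : (d ⟨1, by omega⟩ : ℝ) ≤ μ ⟨1, by omega⟩)
    (hd2 : 2 * (m : ℝ) - 1 - d ⟨0, by omega⟩ ≤ ((n : ℝ) - 2) * d ⟨1, by omega⟩)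
    (α : ℝ) :
    ((1 < α ∨ α < 0) →
      ((1 : ℝ) + d ⟨0, by omega⟩) ^ α + (d ⟨1, by omega⟩ : ℝ) ^ α +
          (2 * (m : ℝ) - 1 - d ⟨0, by omega⟩ - d ⟨1, by omega⟩) ^ α /
            ((n : ℝ) - 3) ^ (α - 1) ≤
        ∑ i ∈ Finset.univ.filter (fun i : Fin n => (i : ℕ) < n - 1), μ i ^ α) ∧
    ((0 < α ∧ α < 1) →
      ∑ i ∈ Finset.univ.filter (fun i : Fin n => (i : ℕ) < n - 1), μ i ^ α ≤
        ((1 : ℝ) + d ⟨0, by omega⟩) ^ α + (d ⟨1, by omega⟩ : ℝ) ^ α +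
          (2 * (m : ℝ) - 1 - d ⟨0, by omega⟩ - d ⟨1, by omega⟩) ^ α /
            ((n : ℝ) - 3) ^ (α - 1)) := by
  set R := univ.filter fun i : Fin n ↦ 2 ≤ (i : ℕ) ∧ (i : ℕ) < n - 1
  have hR : (#R : ℝ) = n - 3 := by
    rw [Fin.card_filter_two_le_lt_sub_one, Nat.cast_sub (by omega)]; norm_num
  have hRne : R.Nonempty := card_pos.1 (by rw [Fin.card_filter_two_le_lt_sub_one]; omega)
  have hpos : ∀ i ∈ R, 0 < μ i := fun i hi ↦ hconn.pos_of_charpoly_lapMatrix_eq hchar hμn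
    (by simp only [R, mem_filter] at hi; simp only [ne_eq, Fin.ext_iff]; omega)
  have htotal : μ ⟨0, by omega⟩ + μ ⟨1, by omega⟩ + ∑ i ∈ R, μ i = 2 * m := by
    rw [← Fin.sum_filter_lt_sub_one (by omega), sum_filter_of_ne, hm,
      SimpleGraph.sum_of_charpoly_lapMatrix_eq hchar]
    exact fun i _ hi ↦ lt_of_le_of_ne (Nat.le_sub_one_of_lt i.2)
      fun h ↦ hi (by rw [← hμn]; exact congr_arg μ (Fin.ext h))
  obtain ⟨σ, hσ⟩ := hdseq
  have hd₁ : (1 : ℝ) ≤ d ⟨1, by omega⟩ := by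
    have : Nontrivial (Fin n) := Fin.nontrivial_iff_two_le.2 (by omega)
    exact_mod_cast hσ _ ▸ hconn.preconnected.degree_pos_of_nontrivial _
  have hd₀₁ : (d ⟨1, by omega⟩ : ℝ) ≤ d ⟨0, by omega⟩ := by
    exact_mod_cast hda (Fin.mk_le_mk.2 zero_le_one)
  have hcon : μ ⟨0, by omega⟩ + μ ⟨1, by omega⟩ + ∑ i ∈ R, μ i - (1 + d ⟨0, by omega⟩) -
      d ⟨1, by omega⟩ ≤ #R * d ⟨1, by omega⟩ := by
    rw [htotal, hR]; linarith
  rw [Fin.sum_filter_lt_sub_one (by omega), ← hR, ← htotal, sub_sub _ (1 : ℝ)]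
  exact ⟨fun hα ↦ rpow_add_rpow_add_rpow_div_card_le hα hRne hpos (by linarith) hμ1 hμ2
      (by linarith) hcon,
    fun ⟨hα₀, hα₁⟩ ↦ rpow_add_rpow_add_rpow_div_card_ge hα₀ hα₁ hRne hpos (by linarith) hμ1 hμ2
      (by linarith) hcon⟩
end
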